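/- arXiv:2012.10781 — 3 statements merged into one kernel-verified Lean document; each statement's English description precedes it below -/
import Mathlib

section
/- Let n ≥ 1, let λ > 0, and let f : ℝⁿ → ℂ be integrable and square-integrable, such that the Fourier transform 𝓕f vanishes outside the closed ball of radius λ centered at the origin. Then ‖f‖_{L²(ℝⁿ)} ≤ (volume of the closed ball of radius λ in ℝⁿ)^{1/2} · ‖f‖_{L¹(ℝⁿ)}. In particular ‖f‖_{L²} ≤ C_n λ^{n/2} ‖f‖_{L¹}, which is the case p₁ = 1, p₂ = 2 of Bernstein's inequality. -/
/-!
Fourier inversion `𝓕⁻ (𝓕 f) = f` holds almost everywhere as soon as `f` and `𝓕 f` are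
integrable (test both sides against smooth compactly supported functions, which are Schwartz
functions). Since `‖𝓕 g‖_∞ ≤ ‖g‖_1`, this gives `‖f‖_∞ ≤ ‖𝓕 f‖_1 ≤ |B_λ| ‖f‖_1` when `𝓕 f`
vanishes off the ball `B_λ`, and then `‖f‖_2² ≤ ‖f‖_∞ ‖f‖_1 ≤ |B_λ| ‖f‖_1²`.
-/

open MeasureTheory Metric
open scoped FourierTransform ENNReal

section LpNorms

variable {α F : Type*} [MeasurableSpace α] {μ : Measure α} [NormedAddCommGroup F]

theorem MeasureTheory.eLpNorm_le_of_enorm_le_of_support_subset {f : α → F} {s : Set α}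
    {C p : ℝ≥0∞} (hsupp : Function.support f ⊆ s) (hC : ∀ x, ‖f x‖ₑ ≤ C) :
    eLpNorm f p μ ≤ C * μ s ^ p.toReal⁻¹ := by
  rw [← eLpNorm_restrict_eq_of_support_subset hsupp]
  simpa using eLpNorm_le_of_ae_enorm_bound (μ := μ.restrict s) (p := p)
    (Filter.Eventually.of_forall hC)

theorem MeasureTheory.eLpNorm_two_sq_le_eLpNorm_top_mul_eLpNorm_one {f : α → F}
    (hf : AEStronglyMeasurable f μ) :
    eLpNorm f 2 μ ^ 2 ≤ eLpNorm f ∞ μ * eLpNorm f 1 μ := by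
  have h := eLpNorm_le_eLpNorm_top_mul_eLpNorm 1 f hf (fun a b ↦ ‖a‖ * ‖b‖) 1
    (Filter.Eventually.of_forall fun x ↦ by simp)
  have hsq : eLpNorm (fun x ↦ ‖f x‖ * ‖f x‖) 1 μ = eLpNorm f 2 μ ^ 2 := by
    simpa [← sq] using eLpNorm_norm_rpow f (p := 1) (μ := μ) two_pos
  simpa [hsq] using h

end LpNorms

section Fourier

variable {V E : Type*} [NormedAddCommGroup V] [InnerProductSpace ℝ V] [FiniteDimensional ℝ V]
  [MeasurableSpace V] [BorelSpace V] [NormedAddCommGroup E] [NormedSpace ℂ E]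

open Real

theorem Real.enorm_fourier_le_eLpNorm_one (f : V → E) (ξ : V) :
    ‖𝓕 f ξ‖ₑ ≤ eLpNorm f 1 volume := by
  rw [fourier_eq, eLpNorm_one_eq_lintegral_enorm]
  refine (enorm_integral_le_lintegral_enorm _).trans_eq ?_
  simp_rw [← ofReal_norm, Circle.norm_smul]

theorem Real.enorm_fourierInv_le_eLpNorm_one (f : V → E) (x : V) :
    ‖𝓕⁻ f x‖ₑ ≤ eLpNorm f 1 volume := by
  rw [fourierInv_eq_fourier_neg]
  exact enorm_fourier_le_eLpNorm_one f (-x)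

theorem Real.eLpNorm_fourier_one_le_of_support_subset (f : V → E) {s : Set V}
    (hsupp : Function.support (𝓕 f) ⊆ s) :
    eLpNorm (𝓕 f) 1 volume ≤ eLpNorm f 1 volume * volume s := by
  simpa using eLpNorm_le_of_enorm_le_of_support_subset (p := 1) hsupp
    (enorm_fourier_le_eLpNorm_one f)

variable [CompleteSpace E]

theorem Real.integral_fourier_smul_eq {φ : V → ℂ} {f : V → E} (hφ : Integrable φ)
    (hf : Integrable f) : ∫ ξ, 𝓕 φ ξ • f ξ = ∫ x, φ x • 𝓕 f x := by
  simpa using! VectorFourier.integral_fourierIntegral_smul_eq_flip (L := innerₗ V)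
    continuous_fourierChar continuous_inner hφ hf

theorem Real.integral_fourierInv_smul_eq {φ : V → ℂ} {f : V → E} (hφ : Integrable φ)
    (hf : Integrable f) : ∫ ξ, 𝓕⁻ φ ξ • f ξ = ∫ x, φ x • 𝓕⁻ f x := by
  have hflip : (-innerₗ V).flip = -innerₗ V := by
    ext x y
    simp [real_inner_comm]
  simpa [hflip] using! VectorFourier.integral_fourierIntegral_smul_eq_flip (L := -innerₗ V)
    continuous_fourierChar continuous_inner.neg hφ hf

theorem MeasureTheory.Integrable.fourierInv_fourier_ae_eq {f : V → E} (hf : Integrable f)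
    (h'f : Integrable (𝓕 f)) : 𝓕⁻ (𝓕 f) =ᵐ[volume] f := by
  have hcont : Continuous (𝓕⁻ (𝓕 f)) :=
    VectorFourier.fourierIntegral_continuous continuous_fourierChar continuous_inner.neg h'f
  refine Filter.EventuallyEq.symm <| ae_eq_of_integral_contDiff_smul_eq hf.locallyIntegrable
    hcont.locallyIntegrable fun g hg hg_supp ↦ ?_
  let φ : SchwartzMap V ℂ := (hg_supp.comp_left Complex.ofReal_zero).toSchwartzMap
    (Complex.ofRealCLM.contDiff.comp hg)
  have hφ : 𝓕 (𝓕⁻ (φ : V → ℂ)) = φ := by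
    rw [← SchwartzMap.fourierInv_coe, ← SchwartzMap.fourier_coe,
      FourierTransform.fourier_fourierInv_eq]
  have hφ_int : Integrable (𝓕⁻ (φ : V → ℂ)) := by
    rw [← SchwartzMap.fourierInv_coe]
    exact (𝓕⁻ φ).integrable
  have hsmul (u : V → E) (x : V) : g x • u x = φ x • u x := (Complex.coe_smul _ _).symm
  calc ∫ x, g x • f x = ∫ x, 𝓕 (𝓕⁻ (φ : V → ℂ)) x • f x := by simp_rw [hφ, hsmul]
    _ = ∫ ξ, 𝓕⁻ (φ : V → ℂ) ξ • 𝓕 f ξ := integral_fourier_smul_eq hφ_int hf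
    _ = ∫ x, φ x • 𝓕⁻ (𝓕 f) x := integral_fourierInv_smul_eq φ.integrable h'f
    _ = ∫ x, g x • 𝓕⁻ (𝓕 f) x := by simp_rw [hsmul]

theorem MeasureTheory.Integrable.eLpNorm_top_le_eLpNorm_fourier_one {f : V → E}
    (hf : Integrable f) (h'f : Integrable (𝓕 f)) :
    eLpNorm f ∞ volume ≤ eLpNorm (𝓕 f) 1 volume := by
  rw [← eLpNorm_congr_ae (hf.fourierInv_fourier_ae_eq h'f)]
  refine (eLpNorm_le_of_ae_enorm_bound (Filter.Eventually.of_forall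
    (enorm_fourierInv_le_eLpNorm_one (𝓕 f)))).trans_eq ?_
  simp

theorem MeasureTheory.Integrable.eLpNorm_two_le_of_support_fourier_subset {f : V → E}
    (hf : Integrable f) {s : Set V} (hs : volume s ≠ ∞) (hsupp : Function.support (𝓕 f) ⊆ s) :
    eLpNorm f 2 volume ≤ volume s ^ (1 / 2 : ℝ) * eLpNorm f 1 volume := by
  have hf_one : eLpNorm f 1 volume ≠ ∞ := (memLp_one_iff_integrable.2 hf).eLpNorm_ne_top
  have hF := eLpNorm_fourier_one_le_of_support_subset f hsupp
  have h'f : Integrable (𝓕 f) := memLp_one_iff_integrable.1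
    ⟨(VectorFourier.fourierIntegral_continuous continuous_fourierChar continuous_inner
      hf).aestronglyMeasurable, hF.trans_lt (ENNReal.mul_lt_top hf_one.lt_top hs.lt_top)⟩
  have hsq : eLpNorm f 2 volume ^ 2 ≤ (volume s ^ (1 / 2 : ℝ) * eLpNorm f 1 volume) ^ 2 :=
    calc eLpNorm f 2 volume ^ 2 ≤ eLpNorm f ∞ volume * eLpNorm f 1 volume :=
          eLpNorm_two_sq_le_eLpNorm_top_mul_eLpNorm_one hf.aestronglyMeasurable
      _ ≤ eLpNorm f 1 volume * volume s * eLpNorm f 1 volume := by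
          gcongr
          exact (hf.eLpNorm_top_le_eLpNorm_fourier_one h'f).trans hF
      _ = (volume s ^ (1 / 2 : ℝ) * eLpNorm f 1 volume) ^ 2 := by
          rw [mul_pow, ← ENNReal.rpow_natCast, ← ENNReal.rpow_mul]
          norm_num
          ring
  exact (ENNReal.pow_le_pow_left_iff two_ne_zero).1 hsq

end Fourier

theorem bernstein_one_two_general (n : ℕ) (lam : ℝ)
    (f : EuclideanSpace ℝ (Fin n) → ℂ)
    (hint : Integrable f (volume : Measure (EuclideanSpace ℝ (Fin n))))
    (hsupp : ∀ ξ : EuclideanSpace ℝ (Fin n),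
      ξ ∉ closedBall (0 : EuclideanSpace ℝ (Fin n)) lam → 𝓕 f ξ = 0) :
    (eLpNorm f 2 (volume : Measure (EuclideanSpace ℝ (Fin n)))).toReal ≤
      (volume (closedBall (0 : EuclideanSpace ℝ (Fin n)) lam)).toReal ^ ((1 : ℝ) / 2) *
        (eLpNorm f 1 (volume : Measure (EuclideanSpace ℝ (Fin n)))).toReal := by
  have hball : volume (closedBall (0 : EuclideanSpace ℝ (Fin n)) lam) ≠ ∞ :=
    measure_closedBall_lt_top.ne
  have hf_one : eLpNorm f 1 volume ≠ ∞ := (memLp_one_iff_integrable.2 hint).eLpNorm_ne_top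
  have h := ENNReal.toReal_mono (by finiteness) <| hint.eLpNorm_two_le_of_support_fourier_subset
    hball fun ξ hξ ↦ by_contra fun hξ_ball ↦ hξ (hsupp ξ hξ_ball)
  rwa [ENNReal.toReal_mul, ← ENNReal.toReal_rpow] at h

/-- Bernstein's inequality, case `p₁ = 1`, `p₂ = 2`: an integrable and square-integrable
function on `ℝⁿ` whose Fourier transform is supported in the closed ball of radius `λ`
satisfies `‖f‖_{L²} ≤ (vol (closedBall 0 λ))^{1/2} ‖f‖_{L¹}`. -/
theorem bernstein_one_two (n : ℕ) (hn : 1 ≤ n) (lam : ℝ) (hlam : 0 < lam)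
    (f : EuclideanSpace ℝ (Fin n) → ℂ)
    (hint : Integrable f (volume : Measure (EuclideanSpace ℝ (Fin n))))
    (hL2 : MemLp f 2 (volume : Measure (EuclideanSpace ℝ (Fin n))))
    (hsupp : ∀ ξ : EuclideanSpace ℝ (Fin n),
      ξ ∉ closedBall (0 : EuclideanSpace ℝ (Fin n)) lam → 𝓕 f ξ = 0) :
    (eLpNorm f 2 (volume : Measure (EuclideanSpace ℝ (Fin n)))).toReal ≤
      (volume (closedBall (0 : EuclideanSpace ℝ (Fin n)) lam)).toReal ^ ((1 : ℝ) / 2) *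
        (eLpNorm f 1 (volume : Measure (EuclideanSpace ℝ (Fin n)))).toReal :=
  bernstein_one_two_general n lam f hint hsupp
end

section
/- Let (X, μ) be a probability space, let L > 0, d_i > 0, ε̄ > 0, δ ∈ [0, 3], q ∈ ℕ, and set λ_q = 2^q / L. Let B : X → ℝ³ be measurable with ∫_X ‖B‖³ dμ < ∞, and suppose: (i) there is a measurable set S ⊆ X with μ(S) ≤ (λ_q L)^{δ − 3} such that B = 0 almost everywhere outside S, and (ii) d_i λ_q² ∫_X ‖B‖³ dμ ≤ ε̄. Then the dyadic energy spectrum value satisfies λ_q^{−1} ∫_X ‖B‖² dμ ≤ (ε̄ / d_i)^{2/3} λ_q^{−7/3} (L λ_q)^{δ/3 − 1}. (This is the upper bound of Theorem 4.3: ℰ_b(k) ≲ (d_i^{−1} ε̄)^{2/3} k^{−7/3} (Lk)^{δ_b/3 − 1}, with the hypotheses spelling out the active-volume property of an intermittent field of intermittency dimension δ and the definition ε̄ = sup_q d_i λ_q² ⟨|B_q|³⟩.) -/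
open MeasureTheory

/-!
Hölder's inequality with exponents `3/2` and `3`, applied to `‖B‖² · 𝟙_S`, gives
`⟨‖B‖²⟩ ≤ ⟨‖B‖³⟩^{2/3} μ(S)^{1/3}`. The flux bound controls `⟨‖B‖³⟩ ≤ (ε̄/d_i) λ_q⁻²` and the
active volume controls `μ(S)^{1/3} ≤ (λ_q L)^{δ/3 - 1}`; collecting powers of `λ_q` gives the claim.
-/

theorem integral_rpow_le_of_ae_eq_zero_off {X : Type*} [MeasurableSpace X] {μ : Measure X}
    {g : X → ℝ} (hg_nonneg : 0 ≤ᵐ[μ] g) (hg : Integrable g μ) {θ : ℝ} (hθ₀ : 0 < θ) (hθ₁ : θ < 1)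
    {S : Set X} (hS : MeasurableSet S) (hμS : μ S ≠ ⊤) (hvan : ∀ᵐ x ∂μ, x ∉ S → g x = 0) :
    ∫ x, g x ^ θ ∂μ ≤ (∫ x, g x ∂μ) ^ θ * μ.real S ^ (1 - θ) := by
  have hpq : θ⁻¹.HolderConjugate (1 - θ)⁻¹ :=
    Real.holderConjugate_iff.mpr ⟨one_lt_inv₀ hθ₀ |>.mpr hθ₁, by simp⟩
  have hgθ : MemLp (fun x => g x ^ θ) (ENNReal.ofReal θ⁻¹) μ := by
    have h := (memLp_one_iff_integrable.mpr hg).norm_rpow_div (ENNReal.ofReal θ)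
    rw [ENNReal.toReal_ofReal hθ₀.le, one_div, ← ENNReal.ofReal_inv_of_pos hθ₀] at h
    refine h.ae_eq ?_
    filter_upwards [hg_nonneg] with x hx
    rw [Real.norm_of_nonneg hx]
  have hind : MemLp (S.indicator fun _ => (1 : ℝ)) (ENNReal.ofReal (1 - θ)⁻¹) μ :=
    memLp_indicator_const _ hS 1 (Or.inr hμS)
  have hholder := integral_mul_le_Lp_mul_Lq_of_nonneg hpq
    (hg_nonneg.mono fun x hx => Real.rpow_nonneg hx θ)
    (Filter.Eventually.of_forall fun x => Set.indicator_nonneg (fun _ _ => zero_le_one) x) hgθ hind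
  have hsupp : ∫ x, g x ^ θ ∂μ = ∫ x, g x ^ θ * S.indicator (fun _ => (1 : ℝ)) x ∂μ := by
    refine integral_congr_ae ?_
    filter_upwards [hvan] with x hx
    by_cases hxS : x ∈ S
    · simp [hxS]
    · simp [hxS, hx hxS, Real.zero_rpow hθ₀.ne']
  have hg_eq : ∫ x, (g x ^ θ) ^ θ⁻¹ ∂μ = ∫ x, g x ∂μ := by
    refine integral_congr_ae ?_
    filter_upwards [hg_nonneg] with x hx
    exact Real.rpow_rpow_inv hx hθ₀.ne'
  have hind_eq : ∫ x, S.indicator (fun _ => (1 : ℝ)) x ^ (1 - θ)⁻¹ ∂μ = μ.real S := by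
    rw [← integral_indicator_one hS]
    congr 1 with x
    by_cases hxS : x ∈ S
    · simp [hxS]
    · simp [hxS, Real.zero_rpow (inv_ne_zero (sub_ne_zero.mpr hθ₁.ne'))]
  rwa [← hsupp, hg_eq, hind_eq, one_div, inv_inv, one_div, inv_inv] at hholder

theorem integral_norm_sq_le_of_ae_eq_zero_off {X E : Type*} [MeasurableSpace X] {μ : Measure X}
    [NormedAddCommGroup E] {f : X → E} (hf : Integrable (fun x => ‖f x‖ ^ 3) μ) {S : Set X}
    (hS : MeasurableSet S) (hμS : μ S ≠ ⊤) (hvan : ∀ᵐ x ∂μ, x ∉ S → f x = 0) :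
    ∫ x, ‖f x‖ ^ 2 ∂μ ≤ (∫ x, ‖f x‖ ^ 3 ∂μ) ^ ((2 : ℝ) / 3) * μ.real S ^ ((1 : ℝ) / 3) := by
  have h := integral_rpow_le_of_ae_eq_zero_off (ae_of_all μ fun x => by positivity) hf
    (θ := 2 / 3) (by norm_num) (by norm_num) hS hμS (hvan.mono fun x hx hxS => by simp [hx hxS])
  have hnorm (x : X) : (‖f x‖ ^ 3) ^ ((2 : ℝ) / 3) = ‖f x‖ ^ 2 := by
    rw [← Real.rpow_natCast _ 3, ← Real.rpow_mul (norm_nonneg _)]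
    norm_num
  simp only [hnorm] at h
  rwa [show (1 : ℝ) - 2 / 3 = 1 / 3 by norm_num] at h

theorem inv_mul_rpow_div_sq_mul_rpow_rpow {a lam c : ℝ} (ha : 0 ≤ a) (hlam : 0 < lam) (hc : 0 ≤ c)
    (δ : ℝ) :
    lam⁻¹ * ((a / lam ^ 2) ^ ((2 : ℝ) / 3) * (c ^ (δ - 3)) ^ ((1 : ℝ) / 3)) =
      a ^ ((2 : ℝ) / 3) * lam ^ (-(7 : ℝ) / 3) * c ^ (δ / 3 - 1) := by
  have hlam_pow : lam⁻¹ * (lam ^ 2) ^ (-(2 : ℝ) / 3) = lam ^ (-(7 : ℝ) / 3) := by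
    rw [← Real.rpow_natCast lam 2, ← Real.rpow_mul hlam.le, ← Real.rpow_neg_one lam,
      ← Real.rpow_add hlam]
    norm_num
  rw [Real.div_rpow ha (by positivity), ← Real.rpow_mul hc, div_eq_mul_inv,
    ← Real.rpow_neg (by positivity), ← hlam_pow]
  ring_nf

theorem energy_spectrum_upper_bound_general {X : Type*} [MeasurableSpace X]
    (μ : Measure X) [IsProbabilityMeasure μ]
    (L di ebar δ : ℝ) (hL : 0 < L) (hdi : 0 < di)
    (q : ℕ)
    (B : X → EuclideanSpace ℝ (Fin 3))
    (hB3 : Integrable (fun x => ‖B x‖ ^ 3) μ)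
    (S : Set X) (hS : MeasurableSet S)
    (hSvol : μ S ≤ ENNReal.ofReal ((((2 : ℝ) ^ q / L) * L) ^ (δ - 3)))
    (hvan : ∀ᵐ x ∂μ, x ∉ S → B x = 0)
    (hflux : di * ((2 : ℝ) ^ q / L) ^ 2 * ∫ x, ‖B x‖ ^ 3 ∂μ ≤ ebar) :
    ((2 : ℝ) ^ q / L)⁻¹ * ∫ x, ‖B x‖ ^ 2 ∂μ ≤
      (ebar / di) ^ ((2 : ℝ) / 3) * ((2 : ℝ) ^ q / L) ^ (-(7 : ℝ) / 3) *
        (L * ((2 : ℝ) ^ q / L)) ^ (δ / 3 - 1) := by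
  set lam : ℝ := (2 : ℝ) ^ q / L
  have hlam : 0 < lam := by positivity
  have hholder := integral_norm_sq_le_of_ae_eq_zero_off hB3 hS (measure_ne_top μ S) hvan
  have hebar : 0 ≤ ebar := le_trans (by positivity) hflux
  have hcube : ∫ x, ‖B x‖ ^ 3 ∂μ ≤ ebar / di / lam ^ 2 := by
    rw [div_div, le_div_iff₀ (by positivity)]
    linarith
  have hvol : μ.real S ≤ (L * lam) ^ (δ - 3) := by
    rw [mul_comm]
    exact ENNReal.toReal_le_of_le_ofReal (by positivity) hSvol
  calc lam⁻¹ * ∫ x, ‖B x‖ ^ 2 ∂μ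
      ≤ lam⁻¹ * ((ebar / di / lam ^ 2) ^ ((2 : ℝ) / 3) * ((L * lam) ^ (δ - 3)) ^ ((1 : ℝ) / 3)) := by
        gcongr
        exact hholder.trans (by gcongr)
    _ = (ebar / di) ^ ((2 : ℝ) / 3) * lam ^ (-(7 : ℝ) / 3) * (L * lam) ^ (δ / 3 - 1) :=
        inv_mul_rpow_div_sq_mul_rpow_rpow (by positivity) hlam (by positivity) δ

/-- Upper bound on the dyadic energy spectrum value (Theorem 4.3, upper bound):
with `λ_q = 2^q/L`, if the Littlewood–Paley piece `B` is active only on a set of measure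
at most `(λ_q L)^{δ−3}` and `d_i λ_q² ⟨|B|³⟩ ≤ ε̄`, then
`λ_q⁻¹ ⟨|B|²⟩ ≤ (ε̄/d_i)^{2/3} λ_q^{−7/3} (L λ_q)^{δ/3 − 1}`. -/
theorem energy_spectrum_upper_bound {X : Type*} [MeasurableSpace X]
    (μ : Measure X) [IsProbabilityMeasure μ]
    (L di ebar δ : ℝ) (hL : 0 < L) (hdi : 0 < di) (hebar : 0 < ebar)
    (hδ : δ ∈ Set.Icc (0 : ℝ) 3) (q : ℕ)
    (B : X → EuclideanSpace ℝ (Fin 3)) (hB : Measurable B)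
    (hB3 : Integrable (fun x => ‖B x‖ ^ 3) μ)
    (S : Set X) (hS : MeasurableSet S)
    (hSvol : μ S ≤ ENNReal.ofReal ((((2 : ℝ) ^ q / L) * L) ^ (δ - 3)))
    (hvan : ∀ᵐ x ∂μ, x ∉ S → B x = 0)
    (hflux : di * ((2 : ℝ) ^ q / L) ^ 2 * ∫ x, ‖B x‖ ^ 3 ∂μ ≤ ebar) :
    ((2 : ℝ) ^ q / L)⁻¹ * ∫ x, ‖B x‖ ^ 2 ∂μ ≤
      (ebar / di) ^ ((2 : ℝ) / 3) * ((2 : ℝ) ^ q / L) ^ (-(7 : ℝ) / 3) *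
        (L * ((2 : ℝ) ^ q / L)) ^ (δ / 3 - 1) :=
  energy_spectrum_upper_bound_general μ L di ebar δ hL hdi q B hB3 S hS hSvol hvan hflux
end

section
/- Let L > 0, let λ_p = 2^p / L for p ∈ ℤ, let q ∈ ℤ, and let y : ℤ → ℝ be nonnegative and finitely supported. Then (∑_{p ≥ q − 1} λ_p^{3/2} y_p)^{2/3} · (∑_{p < q} λ_p³ y_p)^{1/3} ≤ 3 ∑_{p ∈ ℤ} 2^{−|q − p|/3} λ_p² y_p. (This is the kernel estimate at the heart of the flux bound |∫ π_{b,q}| ≲ d_i ∑_p K_{q−p} λ_p² ‖B_p‖_{L³}³ with kernel K_j = λ_{|j|}^{−1/3}, in the lower-bound part of the proof of Theorem 4.3, applied with y_p = ‖B_p‖_{L³}³.) -/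
/-!
Put `λ = λ_q`. Weighted AM–GM gives `A^{2/3} B^{1/3} ≤ λ^{1/2} A + λ⁻¹ B` for the two sums `A`, `B`
on the left, since `(λ^{1/2})^{2/3} (λ⁻¹)^{1/3} = 1`. Termwise, `λ_q^{1/2} λ_p^{3/2} = 2^{(q-p)/2} λ_p²`
is at most `2 · 2^{-|q-p|/3} λ_p²` when `p ≥ q - 1`, and `λ_q⁻¹ λ_p³ = 2^{p-q} λ_p²` is at most
`2^{-|q-p|/3} λ_p²` when `p < q`; so the two terms are bounded by twice and once the right-hand sum.
-/

open Function

theorem Real.rpow_mul_rpow_le_add_of_rpow_mul_rpow_eq_one {w₁ w₂ c d a b : ℝ}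
    (hw₁ : 0 ≤ w₁) (hw₂ : 0 ≤ w₂) (hw : w₁ + w₂ = 1) (hc : 0 ≤ c) (hd : 0 ≤ d)
    (hcd : c ^ w₁ * d ^ w₂ = 1) (ha : 0 ≤ a) (hb : 0 ≤ b) :
    a ^ w₁ * b ^ w₂ ≤ c * a + d * b :=
  calc a ^ w₁ * b ^ w₂ = (c * a) ^ w₁ * (d * b) ^ w₂ := by
        rw [Real.mul_rpow hc ha, Real.mul_rpow hd hb,
          show c ^ w₁ * a ^ w₁ * (d ^ w₂ * b ^ w₂) = (c ^ w₁ * d ^ w₂) * (a ^ w₁ * b ^ w₂) by ring,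
          hcd, one_mul]
    _ ≤ w₁ * (c * a) + w₂ * (d * b) :=
        Real.geom_mean_le_arith_mean2_weighted hw₁ hw₂ (by positivity) (by positivity) hw
    _ ≤ c * a + d * b := add_le_add (mul_le_of_le_one_left (by positivity) (by linarith))
        (mul_le_of_le_one_left (by positivity) (by linarith))

theorem finsum_cond_mul_eq_finsum_ite_mul {α M : Type*} [NonUnitalNonAssocSemiring M]
    (P : α → Prop) [DecidablePred P] (f g : α → M) :
    ∑ᶠ (a) (_ : P a), f a * g a = ∑ᶠ a, (if P a then f a else 0) * g a :=
  finsum_congr fun a => by rw [finsum_eq_if, ite_mul, zero_mul]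

theorem mul_finsum_mul_le_mul_finsum_mul {α : Type*} {y : α → ℝ} (hy : ∀ a, 0 ≤ y a)
    (hfin : (support y).Finite) {u v : α → ℝ} {c d : ℝ} (h : ∀ a, c * u a ≤ d * v a) :
    c * ∑ᶠ a, u a * y a ≤ d * ∑ᶠ a, v a * y a := by
  rw [mul_finsum, mul_finsum]
  refine finsum_le_finsum' (hfin.subset ?_) (hfin.subset ?_) fun a => ?_
  · exact (support_mul_subset_right _ _).trans (support_mul_subset_right _ _)
  · exact (support_mul_subset_right _ _).trans (support_mul_subset_right _ _)
  · simpa only [mul_assoc] using mul_le_mul_of_nonneg_right (h a) (hy a)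

theorem two_rpow_half_le_two_mul_two_rpow_neg_abs_div_three {k : ℝ} (hk : k ≤ 1) :
    (2 : ℝ) ^ (k / 2) ≤ 2 * 2 ^ (-|k| / 3) := by
  rw [mul_comm, ← Real.rpow_add_one two_ne_zero]
  gcongr
  · norm_num
  · cases abs_cases k <;> linarith

theorem two_rpow_neg_le_two_rpow_neg_abs_div_three {k : ℝ} (hk : 0 ≤ k) :
    (2 : ℝ) ^ (-k) ≤ 2 ^ (-|k| / 3) := by
  gcongr
  · norm_num
  · rw [abs_of_nonneg hk]; linarith

theorem two_zpow_div_eq (L : ℝ) (q p : ℤ) :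
    (2 : ℝ) ^ q / L = 2 ^ ((q - p : ℤ) : ℝ) * (2 ^ p / L) := by
  rw [Real.rpow_intCast, mul_div_assoc', ← zpow_add₀ two_ne_zero, sub_add_cancel]

theorem two_zpow_div_rpow_half_mul_rpow_three_halves_le {L : ℝ} (hL : 0 < L) {q p : ℤ}
    (h : q - 1 ≤ p) :
    ((2 : ℝ) ^ q / L) ^ ((1 : ℝ) / 2) * ((2 : ℝ) ^ p / L) ^ ((3 : ℝ) / 2) ≤
      2 * ((2 : ℝ) ^ (-((|q - p| : ℤ) : ℝ) / 3) * ((2 : ℝ) ^ p / L) ^ 2) := by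
  have hlam : 0 < (2 : ℝ) ^ p / L := by positivity
  have hk : ((q - p : ℤ) : ℝ) ≤ 1 := by exact_mod_cast (by omega : q - p ≤ 1)
  rw [two_zpow_div_eq L q p, Real.mul_rpow (by positivity) hlam.le, ← Real.rpow_mul zero_le_two,
    mul_assoc, ← Real.rpow_add hlam, show (1 : ℝ) / 2 + 3 / 2 = (2 : ℕ) by norm_num,
    Real.rpow_natCast, Int.cast_abs, ← mul_assoc, mul_one_div]
  exact mul_le_mul_of_nonneg_right (two_rpow_half_le_two_mul_two_rpow_neg_abs_div_three hk)
    (by positivity)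

theorem two_zpow_div_inv_mul_pow_three_le {L : ℝ} (hL : 0 < L) {q p : ℤ} (h : p < q) :
    ((2 : ℝ) ^ q / L)⁻¹ * ((2 : ℝ) ^ p / L) ^ 3 ≤
      (2 : ℝ) ^ (-((|q - p| : ℤ) : ℝ) / 3) * ((2 : ℝ) ^ p / L) ^ 2 := by
  have hk : (0 : ℝ) ≤ ((q - p : ℤ) : ℝ) := by exact_mod_cast (by omega : 0 ≤ q - p)
  rw [two_zpow_div_eq L q p, mul_inv, ← Real.rpow_neg zero_le_two, mul_assoc,
    show ((2 : ℝ) ^ p / L)⁻¹ * ((2 : ℝ) ^ p / L) ^ 3 = ((2 : ℝ) ^ p / L) ^ 2 by field_simp,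
    Int.cast_abs]
  exact mul_le_mul_of_nonneg_right (two_rpow_neg_le_two_rpow_neg_abs_div_three hk)
    (by positivity)

/-- Kernel estimate for the flux bound (proof of Theorem 4.3, lower bound part):
with `λ_p = 2^p/L` and a nonnegative finitely supported sequence `y`,
`(∑_{p ≥ q−1} λ_p^{3/2} y_p)^{2/3} (∑_{p < q} λ_p³ y_p)^{1/3}
  ≤ 3 ∑_p 2^{−|q−p|/3} λ_p² y_p`. -/
theorem flux_kernel_estimate (L : ℝ) (hL : 0 < L) (q : ℤ) (y : ℤ → ℝ)
    (hy : ∀ p, 0 ≤ y p) (hfin : (Function.support y).Finite) :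
    (∑ᶠ (p : ℤ) (_ : q - 1 ≤ p), ((2 : ℝ) ^ p / L) ^ ((3 : ℝ) / 2) * y p) ^ ((2 : ℝ) / 3) *
      (∑ᶠ (p : ℤ) (_ : p < q), ((2 : ℝ) ^ p / L) ^ 3 * y p) ^ ((1 : ℝ) / 3) ≤
    3 * ∑ᶠ p : ℤ, (2 : ℝ) ^ (-((|q - p| : ℤ) : ℝ) / 3) * ((2 : ℝ) ^ p / L) ^ 2 * y p := by
  classical
  set S := ∑ᶠ p : ℤ, (2 : ℝ) ^ (-((|q - p| : ℤ) : ℝ) / 3) * ((2 : ℝ) ^ p / L) ^ 2 * y p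
  have hlam : 0 < (2 : ℝ) ^ q / L := by positivity
  have hA : ((2 : ℝ) ^ q / L) ^ ((1 : ℝ) / 2) *
      ∑ᶠ (p : ℤ) (_ : q - 1 ≤ p), ((2 : ℝ) ^ p / L) ^ ((3 : ℝ) / 2) * y p ≤ 2 * S := by
    rw [finsum_cond_mul_eq_finsum_ite_mul]
    refine mul_finsum_mul_le_mul_finsum_mul hy hfin fun p => ?_
    split_ifs with hp
    · exact two_zpow_div_rpow_half_mul_rpow_three_halves_le hL hp
    · rw [mul_zero]; positivity
  have hB : ((2 : ℝ) ^ q / L)⁻¹ * ∑ᶠ (p : ℤ) (_ : p < q), ((2 : ℝ) ^ p / L) ^ 3 * y p ≤ 1 * S := by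
    rw [finsum_cond_mul_eq_finsum_ite_mul]
    refine mul_finsum_mul_le_mul_finsum_mul hy hfin fun p => ?_
    split_ifs with hp
    · rw [one_mul]; exact two_zpow_div_inv_mul_pow_three_le hL hp
    · rw [mul_zero]; positivity
  have hweights : (((2 : ℝ) ^ q / L) ^ ((1 : ℝ) / 2)) ^ ((2 : ℝ) / 3) *
      ((2 : ℝ) ^ q / L)⁻¹ ^ ((1 : ℝ) / 3) = 1 := by
    rw [← Real.rpow_mul hlam.le, Real.inv_rpow hlam.le,
      show (1 : ℝ) / 2 * (2 / 3) = 1 / 3 by norm_num]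
    exact mul_inv_cancel₀ (by positivity)
  calc _ ≤ _ := Real.rpow_mul_rpow_le_add_of_rpow_mul_rpow_eq_one (by norm_num) (by norm_num)
          (by norm_num) (by positivity) (by positivity) hweights
          (finsum_nonneg fun p => finsum_nonneg fun _ => mul_nonneg (by positivity) (hy p))
          (finsum_nonneg fun p => finsum_nonneg fun _ => mul_nonneg (by positivity) (hy p))
    _ ≤ 2 * S + 1 * S := add_le_add hA hB
    _ = 3 * S := by ring
end
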